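/- arXiv:2107.01911 — 5 statements merged into one kernel-verified Lean document; each statement's English description precedes it below -/
import Mathlib

section
/- Let G be a finite group and let H and H' be subgroups of G that are Gassmann equivalent in G. Then the normal cores of H and H' in G coincide: ⋂_{σ ∈ G} σ⁻¹Hσ = ⋂_{σ ∈ G} σ⁻¹H'σ. Consequently, if G = Gal(N/F) for a finite Galois extension N/F and H = Gal(N/K), H' = Gal(N/L) for intermediate fields K, L, then K and L have the same Galois closure over F inside N. -/
/-!
An element `g` lies in the normal core of `H` exactly when its whole conjugacy class `C` lies
in `H`, i.e. when `|C ∩ H| = |C|`. Gassmann equivalence says `|C ∩ H| = |C ∩ H'|` for every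
class, so this condition holds for `H` iff it holds for `H'`. For the Galois statement, the
normal closure of `K` is the compositum of its conjugates, whose fixing subgroups are the
conjugates of `Gal(N/K)`; hence it corresponds to the normal core of `Gal(N/K)`.
-/

/-- Two subgroups `H` and `H'` of a group `G` are Gassmann equivalent if every
`g : G` is conjugate to the same number of elements of `H` as of `H'`. -/
def IsGassmannEquiv {G : Type*} [Group G] (H H' : Subgroup G) : Prop :=
  ∀ g : G, Nat.card {h : H // IsConj g (h : G)} = Nat.card {h : H' // IsConj g (h : G)}

namespace Subgroup

variable {G : Type*} [Group G]

theorem mem_normalCore_iff_conjugatesOf_subset {H : Subgroup G} {g : G} :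
    g ∈ H.normalCore ↔ conjugatesOf g ⊆ H := by
  refine ⟨fun hg y hy => ?_, fun hC b => hC (isConj_iff.mpr ⟨b, rfl⟩)⟩
  obtain ⟨b, rfl⟩ := isConj_iff.mp hy
  exact hg b

theorem natCard_isConj_eq_ncard (H : Subgroup G) (g : G) :
    Nat.card {h : H // IsConj g (h : G)} = (↑H ∩ conjugatesOf g).ncard :=
  Nat.card_congr (Equiv.subtypeSubtypeEquivSubtypeInter _ _)

end Subgroup

namespace IsGassmannEquiv

variable {G : Type*} [Group G] {H H' : Subgroup G}

theorem symm (h : IsGassmannEquiv H H') : IsGassmannEquiv H' H :=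
  fun g => (h g).symm

theorem normalCore_le [Finite G] (h : IsGassmannEquiv H H') : H.normalCore ≤ H'.normalCore := by
  intro g hg
  rw [Subgroup.mem_normalCore_iff_conjugatesOf_subset] at hg ⊢
  have hcard : (conjugatesOf g).ncard ≤ (↑H' ∩ conjugatesOf g).ncard := by
    rw [← Subgroup.natCard_isConj_eq_ncard, ← h g, Subgroup.natCard_isConj_eq_ncard,
      Set.inter_eq_right.mpr hg]
  exact Set.inter_eq_right.mp
    (Set.eq_of_subset_of_ncard_le Set.inter_subset_right hcard (Set.toFinite _))

theorem normalCore_eq [Finite G] (h : IsGassmannEquiv H H') : H.normalCore = H'.normalCore :=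
  le_antisymm h.normalCore_le h.symm.normalCore_le

end IsGassmannEquiv

namespace IntermediateField

variable {F N : Type*} [Field F] [Field N] [Algebra F N]

theorem fixingSubgroup_iSup {ι : Sort*} (E : ι → IntermediateField F N) :
    (⨆ i, E i).fixingSubgroup = ⨅ i, (E i).fixingSubgroup :=
  GaloisConnection.l_iSup (l := OrderDual.toDual ∘ fixingSubgroup)
    (u := fixedField ∘ OrderDual.ofDual) (fun _ _ => (le_iff_le _ _).symm)

theorem fixingSubgroup_normalClosure [Normal F N] (K : IntermediateField F N) :
    (normalClosure F K N).fixingSubgroup = K.fixingSubgroup.normalCore := by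
  simp_rw [normalClosure_def'', fixingSubgroup_iSup, IsGalois.map_fixingSubgroup,
    Subgroup.normalCore_eq_iInf_map_conj, Subgroup.pointwise_smul_def]
  rfl

end IntermediateField

/-- Gassmann equivalent subgroups of a finite group have the same normal core
(the intersection of all conjugates); consequently Gassmann equivalent intermediate
fields of a finite Galois extension `N/F` have the same Galois (normal) closure
over `F` inside `N`. -/
theorem normalCore_eq_of_gassmann_equiv :
    (∀ (G : Type) (_ : Group G) (_ : Finite G) (H H' : Subgroup G),
      IsGassmannEquiv H H' →
        (⨅ σ : G, Subgroup.map (MulEquiv.toMonoidHom (MulAut.conj σ)) H) =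
        (⨅ σ : G, Subgroup.map (MulEquiv.toMonoidHom (MulAut.conj σ)) H') ∧
        H.normalCore = H'.normalCore) ∧
    (∀ (F N : Type) (_ : Field F) (_ : Field N) (_ : Algebra F N)
      (_ : FiniteDimensional F N) (_ : IsGalois F N)
      (K L : IntermediateField F N),
      IsGassmannEquiv K.fixingSubgroup L.fixingSubgroup →
        IntermediateField.normalClosure F K N = IntermediateField.normalClosure F L N) := by
  refine ⟨fun G _ _ H H' h => ?_, fun F N _ _ _ _ _ K L h => ?_⟩
  · have hcore := h.normalCore_eq
    exact ⟨H.normalCore_eq_iInf_map_conj.symm.trans (hcore.trans H'.normalCore_eq_iInf_map_conj),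
      hcore⟩
  · apply IsGalois.intermediateFieldEquivSubgroup.injective
    simp only [IsGalois.intermediateFieldEquivSubgroup_apply,
      IntermediateField.fixingSubgroup_normalClosure, h.normalCore_eq]
end

section
/- Let G be a finite group and let H and H' be subgroups of G that are Gassmann equivalent in G. Then the normal closures of H and H' in G coincide: the smallest normal subgroup of G containing H equals the smallest normal subgroup of G containing H'. Consequently, if G = Gal(N/F) for a finite Galois extension N/F and H = Gal(N/K), H' = Gal(N/L) for intermediate fields K, L, then K and L have the same Galois core (the largest Galois extension of F contained in the field) over F. -/
lemma gassmann_normalClosure {G : Type} [Group G] [Finite G] (H H' : Subgroup G)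
    (h : IsGassmannEquiv H H') :
    Subgroup.normalClosure (H : Set G) = Subgroup.normalClosure (H' : Set G) := by
  have key : Group.conjugatesOfSet (H : Set G) = Group.conjugatesOfSet (H' : Set G) := by
    ext g
    have aux : ∀ (K : Subgroup G), g ∈ Group.conjugatesOfSet (K : Set G) ↔
        Nat.card {h : K // IsConj g (h : G)} ≠ 0 := by
      intro K
      rw [Group.mem_conjugatesOfSet_iff, Nat.card_ne_zero]
      constructor
      · rintro ⟨b, hb, hconj⟩
        exact ⟨⟨⟨⟨b, hb⟩, hconj.symm⟩⟩, Finite.of_injective (fun x => (x.1 : G))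
          (fun x y hxy => Subtype.ext (Subtype.ext hxy))⟩
      · rintro ⟨⟨⟨⟨b, hb⟩, hc⟩⟩, -⟩
        exact ⟨b, hb, hc.symm⟩
    rw [aux H, aux H', h g]
  unfold Subgroup.normalClosure
  rw [key]

/-- Gassmann equivalent subgroups of a finite group have the same normal closure
(the smallest normal subgroup containing them); consequently Gassmann equivalent
intermediate fields of a finite Galois extension `N/F` have the same Galois core over `F`,
namely the fixed field of the normal closure of the fixing subgroup. -/
theorem normalClosure_eq_of_gassmann_equiv :
    (∀ (G : Type) (_ : Group G) (_ : Finite G) (H H' : Subgroup G),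
      IsGassmannEquiv H H' →
        Subgroup.normalClosure (H : Set G) = Subgroup.normalClosure (H' : Set G)) ∧
    (∀ (F N : Type) (_ : Field F) (_ : Field N) (_ : Algebra F N)
      (_ : FiniteDimensional F N) (_ : IsGalois F N)
      (K L : IntermediateField F N),
      IsGassmannEquiv K.fixingSubgroup L.fixingSubgroup →
        IntermediateField.fixedField (Subgroup.normalClosure (K.fixingSubgroup : Set (N ≃ₐ[F] N))) =
        IntermediateField.fixedField (Subgroup.normalClosure (L.fixingSubgroup : Set (N ≃ₐ[F] N)))) := by
  constructor
  · intro G _ _ H H' h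
    exact gassmann_normalClosure H H' h
  · intro F N _ _ _ _ _ K L h
    rw [gassmann_normalClosure _ _ h]
end

section
/- Let G be a finite group and H, H' subgroups of G. Then H and H' are Gassmann equivalent in G if and only if for every g ∈ G and every natural number n, the number of orbits of cardinality n of the left-multiplication action of the cyclic subgroup ⟨g⟩ on the left coset space G/H equals the number of orbits of cardinality n of the action of ⟨g⟩ on G/H' (i.e., H and H' have the same coset type with respect to every cyclic subgroup of G). -/
/-- The number of orbits of cardinality `n` of the left-multiplication action of the
cyclic subgroup generated by `g` on the coset space `G ⧸ H`. -/
noncomputable def cosetTypeCount {G : Type*} [Group G] (H : Subgroup G) (g : G) (n : ℕ) : ℕ :=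
  Nat.card {s : Set (G ⧸ H) //
    (∃ x : G ⧸ H, s = MulAction.orbit (Subgroup.zpowers g) x) ∧ Nat.card s = n}

open MulAction

theorem Nat.eq_of_forall_sum_divisors_eq {f f' : ℕ → ℕ}
    (h : ∀ n > 0, ∑ d ∈ n.divisors, f d = ∑ d ∈ n.divisors, f' d) {n : ℕ} (hn : 0 < n) :
    f n = f' n := by
  have inversion (u : ℕ → ℕ) :
      ∑ x ∈ n.divisorsAntidiagonal,
        (ArithmeticFunction.moebius x.1 : ℤ) * ∑ d ∈ x.2.divisors, (u d : ℤ) = u n :=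
    ArithmeticFunction.sum_eq_iff_sum_mul_moebius_eq.1 (fun _ _ => rfl) n hn
  have hsum : ∀ x ∈ n.divisorsAntidiagonal,
      ∑ d ∈ x.2.divisors, (f d : ℤ) = ∑ d ∈ x.2.divisors, (f' d : ℤ) := fun x hx => by
    exact_mod_cast h x.2 (Nat.pos_of_mem_divisors (Nat.snd_mem_divisors_of_mem_antidiagonal hx))
  have : (f n : ℤ) = f' n := by
    rw [← inversion f, ← inversion f']
    exact Finset.sum_congr rfl fun x hx => by rw [hsum x hx]
  exact_mod_cast this

namespace MulAction

section OrbitCount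

variable (C Ω : Type*) [Group C] [MulAction C Ω]

noncomputable def orbitCountOfCard (n : ℕ) : ℕ :=
  Nat.card {s : Set Ω // (∃ x : Ω, s = orbit C x) ∧ Nat.card s = n}

theorem orbitCountOfCard_zero [Finite Ω] : orbitCountOfCard C Ω 0 = 0 := by
  rw [orbitCountOfCard, Nat.card_eq_zero]
  refine .inl ⟨fun ⟨_, ⟨x, hx⟩, hcard⟩ => ?_⟩
  subst hx
  exact (Nat.card_pos_iff.2 ⟨(nonempty_orbit x).to_subtype, inferInstance⟩).ne' hcard

variable {C Ω}

noncomputable def sigmaOrbitsOfCardEquiv (n : ℕ) :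
    (Σ s : {s : Set Ω // (∃ x : Ω, s = orbit C x) ∧ Nat.card s = n}, (s : Set Ω)) ≃
      {x : Ω // Nat.card (orbit C x) = n} where
  toFun p := ⟨p.2, by
    obtain ⟨⟨s, ⟨x, rfl⟩, hs⟩, y, hy⟩ := p
    rwa [orbit_eq_iff.2 hy]⟩
  invFun x := ⟨⟨orbit C x, ⟨x, rfl⟩, x.2⟩, x, mem_orbit_self x.1⟩
  left_inv := by
    rintro ⟨⟨s, ⟨x, rfl⟩, hs⟩, y, hy⟩
    exact Sigma.subtype_ext (Subtype.ext (orbit_eq_iff.2 hy)) rfl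
  right_inv _ := rfl

theorem card_orbit_eq_mul_orbitCountOfCard [Finite Ω] (n : ℕ) :
    Nat.card {x : Ω // Nat.card (orbit C x) = n} = n * orbitCountOfCard C Ω n := by
  have := Fintype.ofFinite {s : Set Ω // (∃ x : Ω, s = orbit C x) ∧ Nat.card s = n}
  rw [← Nat.card_congr (sigmaOrbitsOfCardEquiv n), Nat.card_sigma,
    Finset.sum_congr rfl fun s _ => s.2.2, Finset.sum_const, Finset.card_univ,
    ← Nat.card_eq_fintype_card, smul_eq_mul, mul_comm, orbitCountOfCard]

end OrbitCount

variable {G Ω : Type*} [Group G] [MulAction G Ω] [Finite Ω]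

theorem card_fixedBy_pow_eq_sum (g : G) {n : ℕ} (hn : n ≠ 0) :
    Nat.card (fixedBy Ω (g ^ n)) =
      ∑ d ∈ n.divisors, d * orbitCountOfCard (Subgroup.zpowers g) Ω d := by
  have : fixedBy Ω (g ^ n) =
      (fun x => Nat.card (orbit (Subgroup.zpowers g) x)) ⁻¹' n.divisors := by
    ext x
    have := Fintype.ofFinite (orbit (Subgroup.zpowers g) x)
    simp [mem_fixedBy, pow_smul_eq_iff_minimalPeriod_dvd, minimalPeriod_eq_card, hn]
  rw [this, Finset.card_preimage_eq_sum_card_image_eq fun _ _ => Set.toFinite _]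
  exact Finset.sum_congr rfl fun d _ => card_orbit_eq_mul_orbitCountOfCard d

theorem card_fixedBy_eq_orbitCountOfCard_one (g : G) :
    Nat.card (fixedBy Ω g) = orbitCountOfCard (Subgroup.zpowers g) Ω 1 := by
  simpa using card_fixedBy_pow_eq_sum (Ω := Ω) g one_ne_zero

theorem forall_card_fixedBy_eq_iff {Ω' : Type*} [MulAction G Ω'] [Finite Ω'] :
    (∀ k : G, Nat.card (fixedBy Ω k) = Nat.card (fixedBy Ω' k)) ↔
      ∀ (g : G) (n : ℕ), orbitCountOfCard (Subgroup.zpowers g) Ω n =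
        orbitCountOfCard (Subgroup.zpowers g) Ω' n := by
  constructor
  · intro h g n
    obtain rfl | hn := n.eq_zero_or_pos
    · rw [orbitCountOfCard_zero, orbitCountOfCard_zero]
    · refine Nat.eq_of_mul_eq_mul_left hn (Nat.eq_of_forall_sum_divisors_eq
        (f := fun d => d * orbitCountOfCard _ Ω d) (f' := fun d => d * orbitCountOfCard _ Ω' d)
        (fun m hm => ?_) hn)
      rw [← card_fixedBy_pow_eq_sum g hm.ne', ← card_fixedBy_pow_eq_sum g hm.ne', h]
  · intro h k
    rw [card_fixedBy_eq_orbitCountOfCard_one, card_fixedBy_eq_orbitCountOfCard_one, h]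

variable {α : Type*} [MulAction G α]

theorem card_preimage_smul (a : α) (s : Set α) :
    Nat.card ((· • a) ⁻¹' s : Set G) =
      Nat.card (stabilizer G a) * Nat.card (s ∩ orbit G a : Set α) := by
  have hpre : ((· • a) ⁻¹' s : Set G) =
      QuotientGroup.mk ⁻¹' (ofQuotientStabilizer G a ⁻¹' s) := rfl
  have hrange : Set.range (ofQuotientStabilizer G a) = orbit G a :=
    (QuotientGroup.mk_surjective.range_comp _).symm
  rw [hpre, QuotientGroup.card_preimage_mk, ← Nat.card_image_of_injective
    (injective_ofQuotientStabilizer G a), Set.image_preimage_eq_inter_range, hrange]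

end MulAction

section Gassmann

variable {G : Type*} [Group G]

theorem cosetTypeCount_eq_orbitCountOfCard (H : Subgroup G) (g : G) (n : ℕ) :
    cosetTypeCount H g n = orbitCountOfCard (Subgroup.zpowers g) (G ⧸ H) n :=
  rfl

theorem card_mul_card_fixedBy_quotient (H : Subgroup G) (g : G) :
    Nat.card H * Nat.card (fixedBy (G ⧸ H) g) =
      Nat.card (stabilizer (ConjAct G) g) * Nat.card {h : H // IsConj g h} := by
  have hfix : ∀ x : G, x ∈ QuotientGroup.mk ⁻¹' fixedBy (G ⧸ H) g ↔
      ConjAct.toConjAct x⁻¹ • g ∈ (H : Set G) := by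
    intro x
    rw [Set.mem_preimage, mem_fixedBy, ConjAct.toConjAct_inv_smul, SetLike.mem_coe, mul_assoc,
      ← QuotientGroup.eq, eq_comm]
    rfl
  have hconj : Nat.card ((H : Set G) ∩ orbit (ConjAct G) g : Set G) =
      Nat.card {h : H // IsConj g h} :=
    Nat.card_congr ((Equiv.subtypeSubtypeEquivSubtypeInter _ _).symm.trans
      (Equiv.subtypeEquivRight fun h => by rw [ConjAct.mem_orbit_conjAct, isConj_comm]))
  rw [← QuotientGroup.card_preimage_mk, ← hconj, ← card_preimage_smul,
    Nat.card_congr (((Equiv.inv G).trans ConjAct.toConjAct.toEquiv).subtypeEquiv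
      (q := (· ∈ (· • g) ⁻¹' (H : Set G))) hfix)]

theorem IsGassmannEquiv.card_eq [Finite G] {H H' : Subgroup G} (h : IsGassmannEquiv H H') :
    Nat.card H = Nat.card H' := by
  have := Fintype.ofFinite (ConjClasses G)
  have hsum (K : Subgroup G) :
      Nat.card K = ∑ c : ConjClasses G, Nat.card {k : K // ConjClasses.mk (k : G) = c} := by
    rw [← Finset.card_preimage_eq_sum_card_image_eq fun _ _ => Set.toFinite _,
      Finset.coe_univ, Set.preimage_univ, Nat.card_univ]
  have hclass (K : Subgroup G) (g : G) :
      Nat.card {k : K // ConjClasses.mk (k : G) = ConjClasses.mk g} =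
        Nat.card {k : K // IsConj g k} :=
    Nat.card_congr (Equiv.subtypeEquivRight fun k => by
      rw [ConjClasses.mk_eq_mk_iff_isConj, isConj_comm])
  rw [hsum H, hsum H']
  refine Finset.sum_congr rfl fun c _ => ?_
  obtain ⟨g, rfl⟩ := ConjClasses.mk_surjective c
  rw [hclass, hclass, h g]

theorem isGassmannEquiv_iff_card_fixedBy_eq [Finite G] (H H' : Subgroup G) :
    IsGassmannEquiv H H' ↔
      ∀ g : G, Nat.card (fixedBy (G ⧸ H) g) = Nat.card (fixedBy (G ⧸ H') g) := by
  constructor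
  · intro h g
    refine Nat.eq_of_mul_eq_mul_left (Nat.card_pos (α := H)) ?_
    rw [card_mul_card_fixedBy_quotient, h.card_eq, card_mul_card_fixedBy_quotient, h g]
  · intro h g
    have hindex : Nat.card (G ⧸ H) = Nat.card (G ⧸ H') := by
      simpa only [fixedBy_one_eq_univ, Nat.card_univ] using h 1
    have hcard : Nat.card H = Nat.card H' := by
      refine Nat.eq_of_mul_eq_mul_left (Nat.card_pos (α := G ⧸ H)) ?_
      rw [← Subgroup.card_eq_card_quotient_mul_card_subgroup, hindex,
        ← Subgroup.card_eq_card_quotient_mul_card_subgroup]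
    have : Finite (ConjAct G) := inferInstanceAs (Finite G)
    refine Nat.eq_of_mul_eq_mul_left (Nat.card_pos (α := stabilizer (ConjAct G) g)) ?_
    rw [← card_mul_card_fixedBy_quotient, ← card_mul_card_fixedBy_quotient, hcard, h g]

end Gassmann

/-- Subgroups `H`, `H'` of a finite group `G` are Gassmann equivalent iff they have the
same coset type with respect to every cyclic subgroup `⟨g⟩` of `G`: for each `g ∈ G` and
each `n`, the action of `⟨g⟩` on `G ⧸ H` and on `G ⧸ H'` has the same number of orbits of
cardinality `n`. -/
theorem gassmann_equiv_iff_cosetTypeCount_eq {G : Type*} [Group G] [Finite G]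
    (H H' : Subgroup G) :
    IsGassmannEquiv H H' ↔
      ∀ (g : G) (n : ℕ), cosetTypeCount H g n = cosetTypeCount H' g n := by
  simp_rw [cosetTypeCount_eq_orbitCountOfCard]
  exact (isGassmannEquiv_iff_card_fixedBy_eq H H').trans forall_card_fixedBy_eq_iff
end

section
/- Let H and A be finite groups with A commutative, let φ : H → Aut(A) be an action of H on A, and let G = A ⋊_φ H be the semidirect product, with canonical section σ : H → G, σ(h) = (1, h). Let χ : H → A be a map satisfying the 1-cocycle condition χ(h₁h₂) = χ(h₁) · φ(h₁)(χ(h₂)) for all h₁, h₂ ∈ H. Assume: (i) there is no a ∈ A with χ(h) = a · (φ(h)(a))⁻¹ for all h ∈ H (χ is not a 1-coboundary on H); and (ii) for every h ∈ H there exists a ∈ A such that χ(k) = a · (φ(k)(a))⁻¹ for every k in the cyclic subgroup generated by h (χ restricts to a 1-coboundary on every cyclic subgroup). Then the map h ↦ (χ(h), h) is a group homomorphism H → G, and its image (χ·σ)(H) and the image σ(H) are subgroups of G that are Gassmann equivalent in G but not conjugate in G. -/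
open SemidirectProduct

theorem MonoidHom.card_range_isConj_of_injective {G H : Type*} [Group G] [Group H]
    {f : H →* G} (hf : Function.Injective f) (g : G) :
    Nat.card {x : f.range // IsConj g x} = Nat.card {h : H // IsConj g (f h)} :=
  Nat.card_congr ((MonoidHom.ofInjective hf).toEquiv.subtypeEquiv fun _ => Iff.rfl).symm

theorem isGassmannEquiv_range_of_isConj {G H : Type*} [Group G] [Group H] {f₁ f₂ : H →* G}
    (hf₁ : Function.Injective f₁) (hf₂ : Function.Injective f₂)
    (hconj : ∀ h, IsConj (f₁ h) (f₂ h)) :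
    IsGassmannEquiv f₁.range f₂.range := fun g => by
  rw [MonoidHom.card_range_isConj_of_injective hf₁,
    MonoidHom.card_range_isConj_of_injective hf₂]
  exact Nat.card_congr <| Equiv.subtypeEquivRight fun h =>
    ⟨fun hg => hg.trans (hconj h), fun hg => hg.trans (hconj h).symm⟩

namespace SemidirectProduct

variable {A H : Type*} [Group A] [Group H] {φ : H →* MulAut A}

section Cocycle

variable {χ : H → A} (hχ : ∀ h₁ h₂, χ (h₁ * h₂) = χ h₁ * φ h₁ (χ h₂))

def cocycleHom : H →* A ⋊[φ] H where
  toFun h := ⟨χ h, h⟩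
  map_one' := by
    ext
    · simpa using hχ 1 1
    · rfl
  map_mul' h₁ h₂ := by ext <;> simp [hχ, mul_left, mul_right]

theorem cocycleHom_apply (h : H) : cocycleHom hχ h = ⟨χ h, h⟩ :=
  rfl

theorem cocycleHom_injective : Function.Injective (cocycleHom hχ) :=
  fun _ _ e => congrArg right e

end Cocycle

theorem isConj_inr_mk (h : H) (a : A) :
    IsConj (inr h : A ⋊[φ] H) ⟨a * (φ h a)⁻¹, h⟩ :=
  isConj_iff.mpr ⟨inl a, by ext <;> simp [mul_left, mul_right, inv_left]⟩

theorem exists_eq_mul_inv_of_conj_mem_range_inr {χ : H → A} (g : A ⋊[φ] H)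
    (hg : ∀ h, g * ⟨χ h, h⟩ * g⁻¹ ∈ (inr : H →* A ⋊[φ] H).range) :
    ∃ a : A, ∀ h, χ h = a * (φ h a)⁻¹ := by
  obtain ⟨b, k⟩ := g
  -- `⟨b, k⟩ = inr k * inl a⁻¹`, and conjugation by `inr k` preserves the range of `inr`.
  refine ⟨φ k⁻¹ b⁻¹, fun h => (φ k).injective ?_⟩
  obtain ⟨_, hk⟩ := hg h
  have hleft : b * φ k (χ h) * φ (k * h * k⁻¹) b⁻¹ = 1 := by
    simpa [mul_left, inv_left, mul_assoc] using (congrArg left hk).symm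
  have hcomp : ∀ x y : H, ∀ c : A, φ x (φ y c) = φ (x * y) c := fun x y c => by
    rw [map_mul, MulAut.mul_apply]
  rw [map_mul, map_inv (φ k) (φ h _), hcomp, hcomp, hcomp, mul_inv_cancel, map_one,
    MulAut.one_apply, eq_inv_mul_iff_mul_eq, eq_inv_iff_mul_eq_one]
  exact hleft

end SemidirectProduct

theorem gassmann_equiv_not_conj_of_cocycle_general
    (A H : Type) [CommGroup A] [Group H]
    (φ : H →* MulAut A) (χ : H → A)
    (hcocycle : ∀ h₁ h₂ : H, χ (h₁ * h₂) = χ h₁ * φ h₁ (χ h₂))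
    (hnotcobound : ¬ ∃ a : A, ∀ h : H, χ h = a * (φ h a)⁻¹)
    (hcyclic : ∀ h : H, ∃ a : A, ∀ k ∈ Subgroup.zpowers h, χ k = a * (φ k a)⁻¹) :
    ∃ f : H →* A ⋊[φ] H,
      (∀ h : H, f h = ⟨χ h, h⟩) ∧
      IsGassmannEquiv f.range (SemidirectProduct.inr (φ := φ)).range ∧
      ¬ ∃ g : A ⋊[φ] H,
          Subgroup.map (MulEquiv.toMonoidHom (MulAut.conj g)) f.range =
            (SemidirectProduct.inr (φ := φ)).range := by
  refine ⟨cocycleHom hcocycle, cocycleHom_apply hcocycle, ?_, ?_⟩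
  · refine isGassmannEquiv_range_of_isConj (cocycleHom_injective hcocycle) inr_injective
      fun h => ?_
    obtain ⟨a, ha⟩ := hcyclic h
    rw [cocycleHom_apply, ha h (Subgroup.mem_zpowers h)]
    exact (isConj_inr_mk h a).symm
  · rintro ⟨g, hg⟩
    refine hnotcobound (exists_eq_mul_inv_of_conj_mem_range_inr g fun h => ?_)
    rw [← hg]
    exact Subgroup.mem_map_of_mem _ ⟨h, rfl⟩

/-- Perlis' cohomological criterion: in a semidirect product `G = A ⋊[φ] H` with `A`
a finite commutative group and `H` finite, a `1`-cocycle `χ : H → A` that is not a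
`1`-coboundary on `H` but restricts to a `1`-coboundary on every cyclic subgroup of `H`
yields, via `h ↦ (χ h, h)`, a section whose image is Gassmann equivalent to the canonical
copy `σ(H) = {(1, h)}` of `H` but not conjugate to it in `G`. -/
theorem gassmann_equiv_not_conj_of_cocycle
    (A H : Type) [CommGroup A] [Finite A] [Group H] [Finite H]
    (φ : H →* MulAut A) (χ : H → A)
    (hcocycle : ∀ h₁ h₂ : H, χ (h₁ * h₂) = χ h₁ * φ h₁ (χ h₂))
    (hnotcobound : ¬ ∃ a : A, ∀ h : H, χ h = a * (φ h a)⁻¹)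
    (hcyclic : ∀ h : H, ∃ a : A, ∀ k ∈ Subgroup.zpowers h, χ k = a * (φ k a)⁻¹) :
    ∃ f : H →* A ⋊[φ] H,
      (∀ h : H, f h = ⟨χ h, h⟩) ∧
      IsGassmannEquiv f.range (SemidirectProduct.inr (φ := φ)).range ∧
      ¬ ∃ g : A ⋊[φ] H,
          Subgroup.map (MulEquiv.toMonoidHom (MulAut.conj g)) f.range =
            (SemidirectProduct.inr (φ := φ)).range :=
  gassmann_equiv_not_conj_of_cocycle_general A H φ χ hcocycle hnotcobound hcyclic
end

section
/- Let F be a finite separable extension of 𝔽_2(T), let R be the integral closure of 𝔽_2[T] in F, and let c ∈ R be such that the polynomial g(X) = X² + X + c is irreducible over F. Let K = F[X]/(g) and let α ∈ K be the image of X. Then the integral closure of R in K equals R[α], the R-subalgebra of K generated by α. -/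
/-!
Write `x ∈ K` as `a + b α` with `a, b ∈ F`. Since `α` has minimal polynomial `X² + X + c`
and `F` has characteristic `2`, the trace of `K/F` sends `x` to `2a + b·Tr(α) = b`. Traces of
elements integral over `R` are integral over `R`, so for integral `x` the coefficient `b` lies
in the integrally closed ring `R`; then `a = x - b α` is integral as well, so `a ∈ R` and
`x ∈ R[α]`.
-/

open Polynomial

theorem Polynomial.monic_X_sq_add_X_add_C {R : Type*} [Semiring R] (c : R) :
    (X ^ 2 + X + C c : R[X]).Monic := by
  monicity!

theorem Polynomial.natDegree_X_sq_add_X_add_C {R : Type*} [Semiring R] [Nontrivial R] (c : R) :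
    (X ^ 2 + X + C c : R[X]).natDegree = 2 := by
  compute_degree!

theorem Polynomial.nextCoeff_X_sq_add_X_add_C {R : Type*} [Semiring R] [Nontrivial R] (c : R) :
    (X ^ 2 + X + C c : R[X]).nextCoeff = 1 := by
  rw [nextCoeff, natDegree_X_sq_add_X_add_C]
  simp [coeff_X]

namespace PowerBasis

variable {F S : Type*} [Field F] [CommRing S] [Algebra F S]

theorem dim_eq_two_of_minpoly_eq {pb : PowerBasis F S} {c : F}
    (h : minpoly F pb.gen = X ^ 2 + X + C c) : pb.dim = 2 := by
  rw [← pb.natDegree_minpoly, h, natDegree_X_sq_add_X_add_C]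

variable [Nontrivial S]

theorem exists_eq_algebraMap_add_algebraMap_mul_gen (pb : PowerBasis F S) (hdim : pb.dim ≤ 2)
    (x : S) : ∃ a b : F, x = algebraMap F S a + algebraMap F S b * pb.gen := by
  obtain ⟨f, hdeg, rfl⟩ := pb.exists_eq_aeval x
  refine ⟨f.coeff 0, f.coeff 1, ?_⟩
  conv_lhs => rw [eq_X_add_C_of_natDegree_le_one (by omega : f.natDegree ≤ 1)]
  simp only [map_add, map_mul, aeval_C, aeval_X, add_comm]

variable [CharP F 2] {pb : PowerBasis F S} {c : F}

theorem trace_algebraMap_add_algebraMap_mul_gen (h : minpoly F pb.gen = X ^ 2 + X + C c)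
    (a b : F) : Algebra.trace F S (algebraMap F S a + algebraMap F S b * pb.gen) = b := by
  have htrace_gen : Algebra.trace F S pb.gen = 1 := by
    rw [pb.trace_gen_eq_nextCoeff_minpoly, h, nextCoeff_X_sq_add_X_add_C, CharTwo.neg_eq]
  rw [map_add, Algebra.trace_algebraMap, pb.finrank, dim_eq_two_of_minpoly_eq h, two_smul,
    CharTwo.add_self_eq_zero, zero_add, ← Algebra.smul_def, map_smul, htrace_gen, smul_eq_mul,
    mul_one]

end PowerBasis

section

variable {R F K : Type*} [CommRing R] [Field F] [Field K] [Algebra R F] [Algebra F K]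
  [Algebra R K] [IsScalarTower R F K] {pb : PowerBasis F K} {c : R}

theorem PowerBasis.isIntegral_gen_of_minpoly_eq
    (h : minpoly F pb.gen = X ^ 2 + X + C (algebraMap R F c)) : IsIntegral R pb.gen := by
  refine ⟨X ^ 2 + X + C c, monic_X_sq_add_X_add_C c, ?_⟩
  have hmap : (X ^ 2 + X + C c).map (algebraMap R F) = minpoly F pb.gen := by
    rw [h, Polynomial.map_add, Polynomial.map_add, Polynomial.map_pow, map_X, map_C]
  rw [← aeval_def, ← aeval_map_algebraMap F, hmap, minpoly.aeval]

variable [CharP F 2]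

theorem PowerBasis.isIntegral_coeffs_of_isIntegral
    (h : minpoly F pb.gen = X ^ 2 + X + C (algebraMap R F c)) {a b : F}
    (hx : IsIntegral R (algebraMap F K a + algebraMap F K b * pb.gen)) :
    IsIntegral R a ∧ IsIntegral R b := by
  have : Module.Finite F K := pb.finite
  have hb : IsIntegral R b := by
    simpa only [trace_algebraMap_add_algebraMap_mul_gen h] using
      Algebra.isIntegral_trace (L := F) hx
  have hab : IsIntegral R (algebraMap F K a) := by
    simpa using hx.sub ((hb.algebraMap (B := K)).mul (isIntegral_gen_of_minpoly_eq h))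
  exact ⟨(isIntegral_algebraMap_iff (algebraMap F K).injective).mp hab, hb⟩

theorem PowerBasis.integralClosure_eq_adjoin_gen_of_minpoly_eq [IsIntegrallyClosedIn R F]
    (h : minpoly F pb.gen = X ^ 2 + X + C (algebraMap R F c)) :
    integralClosure R K = Algebra.adjoin R {pb.gen} := by
  refine le_antisymm (fun x hx ↦ ?_) <|
    Algebra.adjoin_le <| Set.singleton_subset_iff.mpr <| isIntegral_gen_of_minpoly_eq h
  obtain ⟨a, b, rfl⟩ := pb.exists_eq_algebraMap_add_algebraMap_mul_gen
    (dim_eq_two_of_minpoly_eq h).le x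
  obtain ⟨ha, hb⟩ := isIntegral_coeffs_of_isIntegral h hx
  obtain ⟨a', rfl⟩ := IsIntegrallyClosedIn.isIntegral_iff.mp ha
  obtain ⟨b', rfl⟩ := IsIntegrallyClosedIn.isIntegral_iff.mp hb
  simp only [← IsScalarTower.algebraMap_apply]
  exact add_mem (Subalgebra.algebraMap_mem _ a')
    (mul_mem (Subalgebra.algebraMap_mem _ b') (Algebra.subset_adjoin rfl))

end

set_option synthInstance.maxHeartbeats 1000000 in
theorem integralClosure_eq_adjoin_root_of_artinSchreier_general
    (F : Type) [Field F] [Algebra (RatFunc (ZMod 2)) F] :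
    letI : Algebra (Polynomial (ZMod 2)) F :=
      ((algebraMap (RatFunc (ZMod 2)) F).comp
        (algebraMap (Polynomial (ZMod 2)) (RatFunc (ZMod 2)))).toAlgebra
    ∀ c : integralClosure (Polynomial (ZMod 2)) F,
      ∀ g : Polynomial F, g = X ^ 2 + X + C (c : F) → Irreducible g →
      letI : Algebra (integralClosure (Polynomial (ZMod 2)) F) (AdjoinRoot g) :=
        ((algebraMap F (AdjoinRoot g)).comp
          (algebraMap (integralClosure (Polynomial (ZMod 2)) F) F)).toAlgebra
      integralClosure (integralClosure (Polynomial (ZMod 2)) F) (AdjoinRoot g) =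
        Algebra.adjoin (integralClosure (Polynomial (ZMod 2)) F) {AdjoinRoot.root g} := by
  let : Algebra (ZMod 2)[X] F :=
    ((algebraMap (RatFunc (ZMod 2)) F).comp (algebraMap (ZMod 2)[X] (RatFunc (ZMod 2)))).toAlgebra
  intro c g hg hirr
  let : Algebra (integralClosure (ZMod 2)[X] F) (AdjoinRoot g) :=
    ((algebraMap F (AdjoinRoot g)).comp (algebraMap (integralClosure (ZMod 2)[X] F) F)).toAlgebra
  have : Fact (Irreducible g) := ⟨hirr⟩
  have : CharP F 2 := charP_of_injective_algebraMap (algebraMap (RatFunc (ZMod 2)) F).injective 2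
  have := IsScalarTower.of_algebraMap_eq
    (R := integralClosure (ZMod 2)[X] F) (S := F) (A := AdjoinRoot g) fun _ ↦ rfl
  have hminpoly : minpoly F (AdjoinRoot.powerBasis hirr.ne_zero).gen = X ^ 2 + X + C (c : F) := by
    rw [AdjoinRoot.powerBasis_gen, AdjoinRoot.minpoly_root hirr.ne_zero, hg,
      (monic_X_sq_add_X_add_C _).leadingCoeff, inv_one, C_1, mul_one]
  exact (AdjoinRoot.powerBasis hirr.ne_zero).integralClosure_eq_adjoin_gen_of_minpoly_eq hminpoly

set_option synthInstance.maxHeartbeats 1000000 in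
/-- For a finite separable extension `F` of `𝔽₂(T)` with ring of integers
`R = integralClosure 𝔽₂[T] F`, and an irreducible Artin–Schreier polynomial
`g = X² + X + c` with `c ∈ R`, the integral closure of `R` in `K = F[X]/(g)`
is `R[α] = Algebra.adjoin R {α}`, where `α` is the image of `X`. -/
theorem integralClosure_eq_adjoin_root_of_artinSchreier
    (F : Type) [Field F] [Algebra (RatFunc (ZMod 2)) F]
    [FiniteDimensional (RatFunc (ZMod 2)) F]
    [Algebra.IsSeparable (RatFunc (ZMod 2)) F] :
    letI : Algebra (Polynomial (ZMod 2)) F :=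
      ((algebraMap (RatFunc (ZMod 2)) F).comp
        (algebraMap (Polynomial (ZMod 2)) (RatFunc (ZMod 2)))).toAlgebra
    ∀ c : integralClosure (Polynomial (ZMod 2)) F,
      ∀ g : Polynomial F, g = X ^ 2 + X + C (c : F) → Irreducible g →
      letI : Algebra (integralClosure (Polynomial (ZMod 2)) F) (AdjoinRoot g) :=
        ((algebraMap F (AdjoinRoot g)).comp
          (algebraMap (integralClosure (Polynomial (ZMod 2)) F) F)).toAlgebra
      integralClosure (integralClosure (Polynomial (ZMod 2)) F) (AdjoinRoot g) =
        Algebra.adjoin (integralClosure (Polynomial (ZMod 2)) F) {AdjoinRoot.root g} :=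
  integralClosure_eq_adjoin_root_of_artinSchreier_general F
end
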